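/- arXiv:0804.1431 — 2 statements merged into one kernel-verified Lean document; each statement's English description precedes it below -/
import Mathlib

section
/- Let 0 < β < 1, f(x) = x/(1+|x|^{1+β}), and let μ be a finite Borel measure on ℝ supported in [a,b] with b - a > x_max := (1/β)^{1/(1+β)}. Define h(x) := ∫ f(x-y) dμ(y). Suppose x₀ ∈ [b - 1/16, b] satisfies h(x₀) ≤ 0 and f(b - x₀) ≤ f(b-a)². Then h(x) ≤ 0 for all x ∈ [a, x₀]. -/
/-!
Split `μ` at `x₀`: for `x ≤ x₀`, `h x = P x - N x` with `P x = ∫_{[a,x₀]} f (x - y) dμ y` and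
`N x = ∫_{(x₀,b]} f (z - x) dμ z ≥ 0`, and the hypothesis `h x₀ ≤ 0` reads `P x₀ ≤ N x₀`.
With `t = x₀ - y`, `u = z - x₀ ∈ (0, 1/16]` and `d = x₀ - x ≥ 0`, the pointwise inequality
`f (t - d) f u ≤ f t f (u + d)` integrates to `P x · N x₀ ≤ P x₀ · N x`, whence `P x ≤ N x`
when `N x₀ > 0`. If `N x₀ = 0` then `P x₀ ≤ 0`, and `f (b - a) f (t - d) ≤ f t` gives
`f (b - a) P x ≤ P x₀ ≤ 0`.

On `[0, ∞)`, `f` increases up to `x_max` and decreases after it, which settles the pointwise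
inequality unless `u + d < x_max < t`. There the loss `f (t - d) - f t ≤ β² d / (1 + β)` is paid
for by the gain `f (u + d) - f u ≥ (32/51) β² d / (1 + β)` (this needs `u ≤ 1/16`) weighted by
`f t ≥ f (b - a)`, because `f u ≤ f (b - a)²` is small compared with `f (b - a)`. Every
monotonicity estimate comes from the tangent-line bound for the concave function `t ↦ t ^ β`.
-/

open MeasureTheory Real Set

noncomputable def driftKernel (β x : ℝ) : ℝ := x / (1 + |x| ^ (1 + β))

/-- The paper's `x_max`. -/
noncomputable def driftPeak (β : ℝ) : ℝ := (1 / β) ^ (1 / (1 + β))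

section Kernel

variable {β s t u d x L : ℝ}

lemma driftKernel_denom_pos (β x : ℝ) : 0 < 1 + |x| ^ (1 + β) := by positivity

lemma driftKernel_neg (β x : ℝ) : driftKernel β (-x) = -driftKernel β x := by
  rw [driftKernel, driftKernel, abs_neg, neg_div]

lemma driftKernel_nonneg (hx : 0 ≤ x) : 0 ≤ driftKernel β x :=
  div_nonneg hx (driftKernel_denom_pos β x).le

lemma driftKernel_nonpos (hx : x ≤ 0) : driftKernel β x ≤ 0 :=
  div_nonpos_of_nonpos_of_nonneg hx (driftKernel_denom_pos β x).le

lemma driftKernel_pos (hx : 0 < x) : 0 < driftKernel β x :=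
  div_pos hx (driftKernel_denom_pos β x)

lemma driftKernel_le_self (hx : 0 ≤ x) : driftKernel β x ≤ x :=
  div_le_self hx (le_add_of_nonneg_right (by positivity))

lemma driftKernel_le_one (hβ : 0 ≤ β) (hx : 0 ≤ x) : driftKernel β x ≤ 1 := by
  rw [driftKernel, abs_of_nonneg hx, div_le_one (by positivity)]
  rcases le_or_gt x 1 with hx1 | hx1
  · linarith [rpow_nonneg hx (1 + β)]
  · linarith [self_le_rpow_of_one_le hx1.le (by linarith : (1 : ℝ) ≤ 1 + β)]

lemma abs_driftKernel_le_one (hβ : 0 ≤ β) (x : ℝ) : |driftKernel β x| ≤ 1 := by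
  have : |driftKernel β x| = driftKernel β |x| := by
    rw [driftKernel, driftKernel, abs_div, abs_of_pos (driftKernel_denom_pos β x), abs_abs]
  exact this ▸ driftKernel_le_one hβ (abs_nonneg x)

lemma continuous_driftKernel (hβ : -1 ≤ β) : Continuous (driftKernel β) :=
  continuous_id.div
    (continuous_const.add (continuous_abs.rpow_const fun _ => Or.inr (by linarith)))
    fun x => (driftKernel_denom_pos β x).ne'

lemma driftKernel_of_nonneg (hβ : 0 ≤ β) (hx : 0 ≤ x) :
    driftKernel β x = x / (1 + x * x ^ β) := by
  rw [driftKernel, abs_of_nonneg hx, rpow_add' hx (by linarith), rpow_one]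

lemma driftKernel_sub_mul_eq (hβ : 0 ≤ β) (hs : 0 ≤ s) (ht : 0 ≤ t) :
    (driftKernel β t - driftKernel β s) * ((1 + s * s ^ β) * (1 + t * t ^ β)) =
      t - s - s * t * (t ^ β - s ^ β) := by
  have : 0 < 1 + s * s ^ β := by positivity
  have : 0 < 1 + t * t ^ β := by positivity
  rw [driftKernel_of_nonneg hβ hs, driftKernel_of_nonneg hβ ht]
  field_simp
  ring

/-- The tangent line of the concave `t ↦ t ^ β` at `s`, multiplied by `s` so that no exponent
`β - 1` appears. -/
lemma mul_rpow_le_tangent (hβ0 : 0 ≤ β) (hβ1 : β ≤ 1) (hs : 0 ≤ s) (ht : 0 ≤ t) :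
    s * t ^ β ≤ s * s ^ β + β * s ^ β * (t - s) := by
  rcases hs.eq_or_lt with rfl | hs
  · simp only [zero_mul, zero_add, sub_zero]
    positivity
  have hbern : (1 + (t / s - 1)) ^ β ≤ 1 + β * (t / s - 1) :=
    rpow_one_add_le_one_add_mul_self (by linarith [div_nonneg ht hs.le]) hβ0 hβ1
  have hsplit : t ^ β = s ^ β * (1 + (t / s - 1)) ^ β := by
    rw [← mul_rpow hs.le (by rw [add_sub_cancel]; positivity)]
    congr 1
    field_simp
    ring
  calc s * t ^ β ≤ s * (s ^ β * (1 + β * (t / s - 1))) := by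
        rw [hsplit]; gcongr
    _ = s * s ^ β + β * s ^ β * (t - s) := by field_simp

lemma driftPeak_rpow (hβ : 0 < β) : driftPeak β ^ (1 + β) = 1 / β := by
  rw [driftPeak, ← rpow_mul (by positivity), one_div_mul_cancel (by linarith), rpow_one]

lemma driftPeak_pos (hβ : 0 < β) : 0 < driftPeak β := by
  unfold driftPeak; positivity

lemma one_le_driftPeak (hβ0 : 0 < β) (hβ1 : β ≤ 1) : 1 ≤ driftPeak β :=
  one_le_rpow (by rw [le_div_iff₀ hβ0]; linarith) (by positivity)

lemma mul_driftPeak_le_one (hβ0 : 0 < β) (hβ1 : β ≤ 1) : β * driftPeak β ≤ 1 := by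
  have : driftPeak β ≤ 1 / β :=
    rpow_le_self_of_one_le (by rw [le_div_iff₀ hβ0]; linarith)
      (by rw [div_le_one (by linarith)]; linarith)
  calc β * driftPeak β ≤ β * (1 / β) := by gcongr
    _ = 1 := by field_simp

lemma mul_mul_rpow_le_one (hβ : 0 < β) (ht : 0 ≤ t) (htp : t ≤ driftPeak β) :
    β * (t * t ^ β) ≤ 1 := by
  have := rpow_le_rpow ht htp (by linarith : 0 ≤ 1 + β)
  rw [driftPeak_rpow hβ, rpow_add' ht (by linarith), rpow_one] at this
  calc β * (t * t ^ β) ≤ β * (1 / β) := by gcongr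
    _ = 1 := by field_simp

lemma one_le_mul_mul_rpow (hβ : 0 < β) (htp : driftPeak β ≤ t) : 1 ≤ β * (t * t ^ β) := by
  have hp := (driftPeak_pos hβ).le
  have := rpow_le_rpow hp htp (by linarith : 0 ≤ 1 + β)
  rw [driftPeak_rpow hβ, rpow_add' (hp.trans htp) (by linarith), rpow_one] at this
  calc 1 = β * (1 / β) := by field_simp
    _ ≤ β * (t * t ^ β) := by gcongr

lemma driftKernel_monotoneOn (hβ0 : 0 < β) (hβ1 : β ≤ 1) :
    MonotoneOn (driftKernel β) (Icc 0 (driftPeak β)) := by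
  rintro s ⟨hs, -⟩ t ⟨ht, htp⟩ hst
  have hpeak := mul_mul_rpow_le_one hβ0 ht htp
  have htan := mul_le_mul_of_nonneg_left (mul_rpow_le_tangent hβ0.le hβ1 hs ht) ht
  have hST : s ^ β ≤ t ^ β := rpow_le_rpow hs hst hβ0.le
  have hD : 0 < (1 + s * s ^ β) * (1 + t * t ^ β) := by positivity
  refine sub_nonneg.1 (nonneg_of_mul_nonneg_left ?_ hD)
  rw [driftKernel_sub_mul_eq hβ0.le hs ht]
  nlinarith [mul_nonneg (mul_nonneg (mul_nonneg hβ0.le ht) (sub_nonneg.2 hST)) (sub_nonneg.2 hst),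
    mul_nonneg (sub_nonneg.2 hpeak) (sub_nonneg.2 hst)]

lemma driftKernel_antitoneOn (hβ0 : 0 < β) (hβ1 : β ≤ 1) :
    AntitoneOn (driftKernel β) (Ici (driftPeak β)) := by
  intro s (hsp : driftPeak β ≤ s) t _ hst
  have hs := (driftPeak_pos hβ0).le.trans hsp
  have ht := hs.trans hst
  have hpeak := one_le_mul_mul_rpow hβ0 hsp
  have htan := mul_le_mul_of_nonneg_left (mul_rpow_le_tangent hβ0.le hβ1 ht hs) hs
  have hST : s ^ β ≤ t ^ β := rpow_le_rpow hs hst hβ0.le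
  have hD : 0 < (1 + t * t ^ β) * (1 + s * s ^ β) := by positivity
  refine sub_nonneg.1 (nonneg_of_mul_nonneg_left ?_ hD)
  rw [driftKernel_sub_mul_eq hβ0.le ht hs]
  nlinarith [mul_nonneg (mul_nonneg (mul_nonneg hβ0.le hs) (sub_nonneg.2 hST)) (sub_nonneg.2 hst),
    mul_nonneg (sub_nonneg.2 hpeak) (sub_nonneg.2 hst)]

lemma driftKernel_le_of_driftPeak_le_of_le (hβ0 : 0 < β) (hβ1 : β ≤ 1)
    (hsp : driftPeak β ≤ s) (hst : s ≤ t) : driftKernel β t ≤ driftKernel β s :=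
  driftKernel_antitoneOn hβ0 hβ1 (mem_Ici.2 hsp) (mem_Ici.2 (hsp.trans hst)) hst

lemma driftKernel_le_driftKernel_driftPeak (hβ0 : 0 < β) (hβ1 : β ≤ 1) (s : ℝ) :
    driftKernel β s ≤ driftKernel β (driftPeak β) := by
  have hp := (driftPeak_pos hβ0).le
  rcases le_total s 0 with hs | hs
  · exact (driftKernel_nonpos hs).trans (driftKernel_nonneg hp)
  rcases le_total s (driftPeak β) with hsp | hsp
  · exact driftKernel_monotoneOn hβ0 hβ1 ⟨hs, hsp⟩ ⟨hp, le_rfl⟩ hsp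
  · exact driftKernel_le_of_driftPeak_le_of_le hβ0 hβ1 le_rfl hsp

lemma driftKernel_sub_le_of_driftPeak_le_of_le (hβ0 : 0 < β) (hβ1 : β ≤ 1)
    (hsp : driftPeak β ≤ s) (hst : s ≤ t) :
    (1 + β) * (driftKernel β s - driftKernel β t) ≤ β ^ 2 * (t - s) := by
  have hs := (driftPeak_pos hβ0).le.trans hsp
  have ht := hs.trans hst
  have hpeak := one_le_mul_mul_rpow hβ0 hsp
  have htan := mul_le_mul_of_nonneg_left (mul_rpow_le_tangent hβ0.le hβ1 hs ht) ht
  have hST : s ^ β ≤ t ^ β := rpow_le_rpow hs hst hβ0.le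
  have hS : 0 ≤ s ^ β := rpow_nonneg hs β
  have hT : 0 ≤ t ^ β := rpow_nonneg ht β
  have hpeakT : 1 ≤ β * (s * t ^ β) := by
    nlinarith [mul_le_mul_of_nonneg_left hST (mul_nonneg hβ0.le hs)]
  have hD : 0 < (1 + s * s ^ β) * (1 + t * t ^ β) := by positivity
  refine le_of_mul_le_mul_right ?_ hD
  rw [mul_assoc, ← neg_sub (driftKernel β t), neg_mul, driftKernel_sub_mul_eq hβ0.le hs ht]
  nlinarith [mul_nonneg (mul_nonneg (mul_nonneg hβ0.le ht) (sub_nonneg.2 hST)) (sub_nonneg.2 hst),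
    mul_nonneg (mul_nonneg (mul_nonneg hβ0.le hS) (sub_nonneg.2 hpeakT)) (sub_nonneg.2 hst),
    mul_nonneg (mul_nonneg hS hs) (sub_nonneg.2 hst),
    mul_nonneg (mul_nonneg hT ht) (sub_nonneg.2 hst)]

lemma driftKernel_sub_le (hβ0 : 0 < β) (hβ1 : β ≤ 1) (htp : driftPeak β ≤ t) (hst : s ≤ t) :
    (1 + β) * (driftKernel β s - driftKernel β t) ≤ β ^ 2 * (t - s) := by
  rcases le_total (driftPeak β) s with hsp | hsp
  · exact driftKernel_sub_le_of_driftPeak_le_of_le hβ0 hβ1 hsp hst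
  calc (1 + β) * (driftKernel β s - driftKernel β t)
      ≤ (1 + β) * (driftKernel β (driftPeak β) - driftKernel β t) := by
        gcongr
        exact driftKernel_le_driftKernel_driftPeak hβ0 hβ1 s
    _ ≤ β ^ 2 * (t - driftPeak β) :=
        driftKernel_sub_le_of_driftPeak_le_of_le hβ0 hβ1 le_rfl htp
    _ ≤ β ^ 2 * (t - s) := by gcongr

lemma one_add_two_mul_le_sixteen_rpow (hβ : 0 ≤ β) : 1 + 2 * β ≤ (16 : ℝ) ^ β := by
  have hlog : 2 ≤ Real.log 16 := by
    rw [le_log_iff_exp_le (by norm_num), show (2 : ℝ) = 1 + 1 by norm_num, exp_add]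
    nlinarith [exp_one_lt_d9, exp_pos 1]
  rw [rpow_def_of_pos (by norm_num)]
  nlinarith [add_one_le_exp (Real.log 16 * β)]

/-- `u ^ β ≤ 1 / (1 + 2β)` bounds the numerator of the difference quotient below by `2βd/3`, and
`u + d ≤ x_max` bounds its denominator above by `(17/16) (1 + β) / β`. -/
lemma driftKernel_add_sub_ge (hβ0 : 0 < β) (hβ1 : β ≤ 1) (hu : 0 < u) (hu16 : u ≤ 1 / 16)
    (hd : 0 ≤ d) (hud : u + d ≤ driftPeak β) :
    32 * β ^ 2 * d ≤ 51 * (1 + β) * (driftKernel β (u + d) - driftKernel β u) := by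
  have hud0 : 0 ≤ u + d := by linarith
  have hS : 0 ≤ u ^ β := rpow_nonneg hu.le β
  have hS1 : u ^ β ≤ 1 := rpow_le_one hu.le (by linarith) hβ0.le
  have hS16 : u ^ β * (1 + 2 * β) ≤ 1 := by
    have h16u : (16 : ℝ) ^ β * u ^ β ≤ 1 := by
      rw [← mul_rpow (by norm_num) hu.le]
      exact rpow_le_one (by positivity) (by linarith) hβ0.le
    nlinarith [one_add_two_mul_le_sixteen_rpow hβ0.le]
  have hβud : β * (u + d) ≤ 1 :=
    (mul_le_mul_of_nonneg_left hud hβ0.le).trans (mul_driftPeak_le_one hβ0 hβ1)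
  have htan := mul_le_mul_of_nonneg_left (mul_rpow_le_tangent hβ0.le hβ1 hu.le hud0) hud0
  have hnum₁ : d * (1 - u ^ β) ≤ u + d - u - u * (u + d) * ((u + d) ^ β - u ^ β) := by
    nlinarith [mul_le_mul_of_nonneg_left hβud (mul_nonneg hS hd)]
  have hnum : 2 * β * d ≤ 3 * (u + d - u - u * (u + d) * ((u + d) ^ β - u ^ β)) := by
    nlinarith [mul_le_mul_of_nonneg_left hS16 hd, mul_nonneg hd (sub_nonneg.2 hS1),
      mul_nonneg (mul_nonneg hd (sub_nonneg.2 hS1)) (sub_nonneg.2 hβ1)]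
  have hDu : 1 + u * u ^ β ≤ 17 / 16 := by nlinarith
  have hDud : β * (1 + (u + d) * (u + d) ^ β) ≤ 1 + β := by
    linarith [mul_mul_rpow_le_one hβ0 hud0 hud]
  have hD : 0 < (1 + u * u ^ β) * (1 + (u + d) * (u + d) ^ β) := by positivity
  refine le_of_mul_le_mul_right ?_ hD
  rw [mul_assoc (51 * (1 + β)), driftKernel_sub_mul_eq hβ0.le hu.le hud0]
  have hprod := mul_le_mul hDu hDud (by positivity) (by norm_num)
  nlinarith [mul_le_mul_of_nonneg_left hprod (by positivity : (0:ℝ) ≤ 32 * β * d)]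

lemma driftKernel_mul_le (hβ0 : 0 < β) (hβ1 : β ≤ 1) (ht : 0 ≤ t) (htL : t ≤ L) (hd : 0 ≤ d) :
    driftKernel β L * driftKernel β (t - d) ≤ driftKernel β t := by
  have hc0 : 0 ≤ driftKernel β L := driftKernel_nonneg (by linarith)
  have hc1 : driftKernel β L ≤ 1 := driftKernel_le_one hβ0.le (by linarith)
  rcases le_total (t - d) 0 with htd | htd
  · nlinarith [driftKernel_nonpos (β := β) htd, driftKernel_nonneg (β := β) ht]
  rcases le_total t (driftPeak β) with htp | htp
  · have := driftKernel_monotoneOn hβ0 hβ1 ⟨htd, by linarith⟩ ⟨ht, htp⟩ (by linarith)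
    nlinarith [driftKernel_nonneg (β := β) htd]
  · have := driftKernel_le_of_driftPeak_le_of_le hβ0 hβ1 htp htL
    nlinarith [driftKernel_le_one (β := β) hβ0.le htd]

lemma driftKernel_mul_le_mul_of_add_le_driftPeak_le (hβ0 : 0 < β) (hβ1 : β ≤ 1)
    (htp : driftPeak β ≤ t) (htL : t ≤ L) (hu : 0 < u) (hu16 : u ≤ 1 / 16)
    (hfu : driftKernel β u ≤ driftKernel β L ^ 2) (hd : 0 ≤ d) (hudp : u + d ≤ driftPeak β) :
    driftKernel β (t - d) * driftKernel β u ≤ driftKernel β t * driftKernel β (u + d) := by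
  set K := driftKernel β
  set c := K L
  have hc : 0 < c := driftKernel_pos (by linarith [driftPeak_pos hβ0])
  have hct : c ≤ K t := driftKernel_le_of_driftPeak_le_of_le hβ0 hβ1 htp htL
  have hKt : 0 ≤ K t := driftKernel_nonneg (by linarith [driftPeak_pos hβ0])
  have hloss := driftKernel_sub_le hβ0 hβ1 htp (by linarith : t - d ≤ t)
  have hgain := driftKernel_add_sub_ge hβ0 hβ1 hu hu16 hd hudp
  have hKu : 51 * K u ≤ 32 * c := by
    rcases le_or_gt (51 / 512) c with hc' | hc'
    · linarith [driftKernel_le_self (β := β) hu.le]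
    · nlinarith
  have key : 51 * ((1 + β) * ((K (t - d) - K t) * K u))
      ≤ 51 * ((1 + β) * (K t * (K (u + d) - K u))) :=
    calc 51 * ((1 + β) * ((K (t - d) - K t) * K u))
        = ((1 + β) * (K (t - d) - K t)) * (51 * K u) := by ring
      _ ≤ (β ^ 2 * (t - (t - d))) * (32 * c) :=
          mul_le_mul hloss hKu (by linarith [driftKernel_nonneg (β := β) hu.le])
            (mul_nonneg (sq_nonneg β) (by linarith))
      _ = c * (32 * β ^ 2 * d) := by ring
      _ ≤ K t * (51 * (1 + β) * (K (u + d) - K u)) := mul_le_mul hct hgain (by positivity) hKt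
      _ = 51 * ((1 + β) * (K t * (K (u + d) - K u))) := by ring
  have := le_of_mul_le_mul_left (le_of_mul_le_mul_left key (by norm_num)) (by linarith)
  linarith

lemma driftKernel_mul_le_mul (hβ0 : 0 < β) (hβ1 : β ≤ 1) (ht : 0 ≤ t) (htL : t ≤ L)
    (hu : 0 < u) (hu16 : u ≤ 1 / 16) (hfu : driftKernel β u ≤ driftKernel β L ^ 2)
    (hd : 0 ≤ d) (hudL : u + d ≤ L) :
    driftKernel β (t - d) * driftKernel β u ≤ driftKernel β t * driftKernel β (u + d) := by
  set K := driftKernel β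
  have hc0 : 0 < K L := driftKernel_pos (by linarith)
  have hc1 : K L ≤ 1 := driftKernel_le_one hβ0.le (by linarith)
  have hKu : 0 ≤ K u := driftKernel_nonneg hu.le
  have hKt : 0 ≤ K t := driftKernel_nonneg ht
  have hfu_le : K u ≤ K L := hfu.trans (by nlinarith)
  have hKud : K u ≤ K (u + d) := by
    rcases le_total (u + d) (driftPeak β) with hudp | hudp
    · exact driftKernel_monotoneOn hβ0 hβ1 ⟨hu.le, by linarith⟩ ⟨by linarith, hudp⟩ (by linarith)
    · exact hfu_le.trans (driftKernel_le_of_driftPeak_le_of_le hβ0 hβ1 hudp hudL)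
  rcases le_total (t - d) 0 with htd | htd
  · nlinarith [driftKernel_nonpos (β := β) htd]
  rcases le_total t (driftPeak β) with htp | htp
  · exact mul_le_mul (driftKernel_monotoneOn hβ0 hβ1 ⟨htd, by linarith⟩ ⟨ht, htp⟩ (by linarith))
      hKud hKu hKt
  rcases le_total (u + d) (driftPeak β) with hudp | hudp
  · exact driftKernel_mul_le_mul_of_add_le_driftPeak_le hβ0 hβ1 htp htL hu hu16 hfu hd hudp
  have hct := driftKernel_le_of_driftPeak_le_of_le hβ0 hβ1 htp htL
  have hcud := driftKernel_le_of_driftPeak_le_of_le hβ0 hβ1 hudp hudL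
  nlinarith [driftKernel_le_one (β := β) hβ0.le htd, mul_le_mul hct hcud hc0.le hKt]

end Kernel

section Integral

variable {α : Type*} [MeasurableSpace α] {μ : Measure α}

lemma setIntegral_mul_setIntegral_le {s t : Set α} (hs : MeasurableSet s) (ht : MeasurableSet t)
    {φ φ' ψ ψ' : α → ℝ} (hφ : IntegrableOn φ s μ) (hφ' : IntegrableOn φ' s μ)
    (hψ : IntegrableOn ψ t μ) (hψ' : IntegrableOn ψ' t μ)
    (hle : ∀ y ∈ s, ∀ z ∈ t, φ y * ψ z ≤ φ' y * ψ' z) :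
    (∫ y in s, φ y ∂μ) * (∫ z in t, ψ z ∂μ) ≤ (∫ y in s, φ' y ∂μ) * ∫ z in t, ψ' z ∂μ := by
  have hinner : ∀ y ∈ s, φ y * ∫ z in t, ψ z ∂μ ≤ φ' y * ∫ z in t, ψ' z ∂μ := fun y hy => by
    rw [← integral_const_mul, ← integral_const_mul]
    exact setIntegral_mono_on (hψ.const_mul _) (hψ'.const_mul _) ht (hle y hy)
  rw [← integral_mul_const, ← integral_mul_const]
  exact setIntegral_mono_on (hφ.mul_const _) (hφ'.mul_const _) hs hinner

lemma integrable_driftKernel_comp [IsFiniteMeasure μ] {β : ℝ} (hβ : 0 ≤ β) {g : α → ℝ}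
    (hg : Measurable g) : Integrable (fun y => driftKernel β (g y)) μ :=
  .of_bound ((continuous_driftKernel (by linarith)).measurable.comp hg).aestronglyMeasurable 1
    (ae_of_all _ fun y => abs_driftKernel_le_one hβ (g y))

end Integral

section Split

variable {μ : Measure ℝ} {β a b c x₀ x : ℝ}

lemma integral_eq_setIntegral_Icc_add_setIntegral_Ioc {g : ℝ → ℝ} (hg : Integrable g μ)
    (hac : a ≤ c) (hcb : c ≤ b) (hsupp : μ (Icc a b)ᶜ = 0) :
    ∫ y, g y ∂μ = (∫ y in Icc a c, g y ∂μ) + ∫ y in Ioc c b, g y ∂μ := by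
  rw [← setIntegral_union ((Iic_disjoint_Ioc le_rfl).mono_left Icc_subset_Iic_self)
      measurableSet_Ioc hg.integrableOn hg.integrableOn,
    Icc_union_Ioc_eq_Icc hac hcb, Measure.restrict_eq_self_of_ae_mem (ae_iff.2 hsupp)]

lemma integral_driftKernel_sub_eq [IsFiniteMeasure μ] (hβ : 0 ≤ β) (hac : a ≤ c) (hcb : c ≤ b)
    (hsupp : μ (Icc a b)ᶜ = 0) (x : ℝ) :
    ∫ y, driftKernel β (x - y) ∂μ =
      (∫ y in Icc a c, driftKernel β (x - y) ∂μ) - ∫ z in Ioc c b, driftKernel β (z - x) ∂μ := by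
  rw [integral_eq_setIntegral_Icc_add_setIntegral_Ioc
      (integrable_driftKernel_comp (g := (x - ·)) hβ (measurable_id.const_sub x)) hac hcb hsupp,
    sub_eq_add_neg, ← integral_neg]
  simp_rw [← driftKernel_neg, neg_sub]

lemma setIntegral_Ioc_driftKernel_nonneg (hx : x ≤ x₀) :
    0 ≤ ∫ z in Ioc x₀ b, driftKernel β (z - x) ∂μ :=
  setIntegral_nonneg measurableSet_Ioc fun _ hz => driftKernel_nonneg (by linarith [hz.1])

lemma setIntegral_driftKernel_mul_le_mul [IsFiniteMeasure μ] (hβ0 : 0 < β) (hβ1 : β ≤ 1)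
    (hbx₀ : b - 1 / 16 ≤ x₀) (hax : a ≤ x) (hxx₀ : x ≤ x₀)
    (hfx₀ : driftKernel β (b - x₀) ≤ driftKernel β (b - a) ^ 2) :
    (∫ y in Icc a x₀, driftKernel β (x - y) ∂μ) * (∫ z in Ioc x₀ b, driftKernel β (z - x₀) ∂μ) ≤
      (∫ y in Icc a x₀, driftKernel β (x₀ - y) ∂μ) * ∫ z in Ioc x₀ b, driftKernel β (z - x) ∂μ := by
  have hint {s : Set ℝ} {g : ℝ → ℝ} (hg : Measurable g) :
      IntegrableOn (fun y => driftKernel β (g y)) s μ :=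
    (integrable_driftKernel_comp hβ0.le hg).integrableOn
  refine setIntegral_mul_setIntegral_le measurableSet_Icc measurableSet_Ioc
    (hint (measurable_id.const_sub _)) (hint (measurable_id.const_sub _))
    (hint (measurable_id.sub_const _)) (hint (measurable_id.sub_const _))
    fun y ⟨hay, hyx₀⟩ z ⟨hx₀z, hzb⟩ => ?_
  have hpeak := one_le_driftPeak hβ0 hβ1
  have hfu : driftKernel β (z - x₀) ≤ driftKernel β (b - a) ^ 2 :=
    (driftKernel_monotoneOn hβ0 hβ1 ⟨by linarith, by linarith⟩ ⟨by linarith, by linarith⟩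
      (by linarith)).trans hfx₀
  have := driftKernel_mul_le_mul hβ0 hβ1 (sub_nonneg.2 hyx₀) (by linarith : x₀ - y ≤ b - a)
    (sub_pos.2 hx₀z) (by linarith) hfu (sub_nonneg.2 hxx₀) (by linarith)
  rwa [sub_sub_sub_cancel_left, sub_add_sub_cancel] at this

lemma mul_setIntegral_driftKernel_le [IsFiniteMeasure μ] (hβ0 : 0 < β) (hβ1 : β ≤ 1)
    (hx₀b : x₀ ≤ b) (hxx₀ : x ≤ x₀) :
    driftKernel β (b - a) * ∫ y in Icc a x₀, driftKernel β (x - y) ∂μ ≤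
      ∫ y in Icc a x₀, driftKernel β (x₀ - y) ∂μ := by
  rw [← integral_const_mul]
  refine setIntegral_mono_on
    ((integrable_driftKernel_comp hβ0.le (measurable_id.const_sub x)).integrableOn.const_mul _)
    (integrable_driftKernel_comp hβ0.le (measurable_id.const_sub x₀)).integrableOn
    measurableSet_Icc fun y ⟨hay, hyx₀⟩ => ?_
  have := driftKernel_mul_le hβ0 hβ1 (sub_nonneg.2 hyx₀) (by linarith : x₀ - y ≤ b - a)
    (sub_nonneg.2 hxx₀)
  rwa [sub_sub_sub_cancel_left] at this

end Split

theorem drift_nonpos_left (β : ℝ) (hβ0 : 0 < β) (hβ1 : β < 1)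
    (f : ℝ → ℝ) (hf : ∀ x, f x = x / (1 + |x| ^ (1 + β)))
    (xmax : ℝ) (hx : xmax = (1 / β) ^ (1 / (1 + β)))
    (a b : ℝ) (hbig : xmax < b - a)
    (μ : Measure ℝ) [IsFiniteMeasure μ] (hsupp : μ (Set.Icc a b)ᶜ = 0)
    (h : ℝ → ℝ) (hh : ∀ x, h x = ∫ y, f (x - y) ∂μ)
    (x₀ : ℝ) (hx₀ : x₀ ∈ Set.Icc (b - 1/16) b)
    (hh0 : h x₀ ≤ 0) (hfx₀ : f (b - x₀) ≤ (f (b - a)) ^ 2) :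
    ∀ x ∈ Set.Icc a x₀, h x ≤ 0 := by
  obtain rfl : f = driftKernel β := funext fun w => by rw [hf w, driftKernel]
  obtain rfl : xmax = driftPeak β := hx
  obtain ⟨hbx₀, hx₀b⟩ := hx₀
  rintro x ⟨hax, hxx₀⟩
  have hsplit := integral_driftKernel_sub_eq (μ := μ) hβ0.le (hax.trans hxx₀) hx₀b hsupp
  have hAB := hsplit x₀ ▸ hh x₀ ▸ hh0
  have hPB := setIntegral_driftKernel_mul_le_mul (μ := μ) hβ0 hβ1.le hbx₀ hax hxx₀ hfx₀
  have hcP := mul_setIntegral_driftKernel_le (μ := μ) (a := a) hβ0 hβ1.le hx₀b hxx₀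
  have hB := setIntegral_Ioc_driftKernel_nonneg (μ := μ) (β := β) (b := b) (le_refl x₀)
  have hN := setIntegral_Ioc_driftKernel_nonneg (μ := μ) (β := β) (b := b) hxx₀
  have hc : 0 < driftKernel β (b - a) := driftKernel_pos ((driftPeak_pos hβ0).trans hbig)
  rw [hh, hsplit, sub_nonpos]
  rcases hB.eq_or_lt with hB0 | hBpos
  · nlinarith
  · exact le_of_mul_le_mul_right (by nlinarith) hBpos
end

section
/- Let 0 < β < 1, f(x) = x/(1+|x|^{1+β}), and let μ be a finite measure supported in [a,b]. Define h(x) = ∫ f(x-y) dμ(y). Then h is differentiable and for all x ∈ [b - 1/2, b], h'(x) ≥ -h(x); consequently x ↦ h(x)e^x is nondecreasing on [b-1/2, b]. -/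
/-!
Writing `t = |z| ^ (1 + β)`, the drift `f z = z / (1 + t)` has derivative
`f' z = (1 - β t) / (1 + t) ^ 2`, so `f' z + f z = (1 + z + t (z - β)) / (1 + t) ^ 2`.
For `β ≤ 1` the numerator is nonnegative when `z ≥ -1/2`: for `z ≥ 0` because `t ≤ z` when
`z ≤ 1`, and for `z = -s < 0` because `s ^ β (s + β) ≤ 1` by Bernoulli's inequality
`s ^ β ≤ 1 + β (s - 1)`. Since `f'` is bounded, `h' = ∫ f'(x - y) dμ(y)`, and for `x ≥ b - 1/2`
every `x - y` with `y` in the support is `≥ -1/2`, so `h' + h ≥ 0` and `(h eˣ)' = (h' + h) eˣ ≥ 0`.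
-/

open MeasureTheory Real Set Filter
open scoped NNReal

theorem hasDerivAt_integral_comp_sub {F F' : ℝ → ℝ} {C : ℝ≥0} {μ : Measure ℝ}
    [IsFiniteMeasure μ] (hF : ∀ z, HasDerivAt F (F' z) z) (hF'_le : ∀ z, |F' z| ≤ C) {x : ℝ}
    (hint : Integrable (fun y => F (x - y)) μ) :
    Integrable (fun y => F' (x - y)) μ ∧
      HasDerivAt (fun x => ∫ y, F (x - y) ∂μ) (∫ y, F' (x - y) ∂μ) x := by
  have hF_cont : Continuous F := continuous_iff_continuousAt.2 fun z => (hF z).continuousAt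
  have hF'_eq : F' = deriv F := funext fun z => (hF z).deriv.symm
  have hF_lip : LipschitzWith C F :=
    lipschitzWith_of_nnnorm_deriv_le (fun z => (hF z).differentiableAt) fun z => by
      rw [← hF'_eq, ← NNReal.coe_le_coe, coe_nnnorm]
      exact hF'_le z
  refine hasDerivAt_integral_of_dominated_loc_of_lip (bound := fun _ => (C : ℝ)) univ_mem
    (.of_forall fun x => (hF_cont.comp (continuous_const.sub continuous_id)).aestronglyMeasurable)
    hint
    ((hF'_eq ▸ measurable_deriv F).comp (measurable_const.sub measurable_id)).aestronglyMeasurable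
    (.of_forall fun y => ?_) (integrable_const _) (.of_forall fun y => ?_)
  · rw [Real.nnabs_coe]
    refine (LipschitzWith.of_dist_le_mul fun x₁ x₂ => ?_).lipschitzOnWith
    simpa only [dist_sub_right] using hF_lip.dist_le_mul (x₁ - y) (x₂ - y)
  · exact (hF (x - y)).comp_sub_const x y

theorem monotoneOn_mul_exp_of_neg_le_deriv {g : ℝ → ℝ} {D : Set ℝ} (hD : Convex ℝ D)
    (hg : ContinuousOn g D) (hg' : DifferentiableOn ℝ g (interior D))
    (h : ∀ x ∈ interior D, -g x ≤ deriv g x) : MonotoneOn (fun x => g x * exp x) D := by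
  refine monotoneOn_of_deriv_nonneg hD (hg.mul continuous_exp.continuousOn)
    (hg'.mul differentiable_exp.differentiableOn) fun x hx => ?_
  have hgx := (hg'.differentiableAt (isOpen_interior.mem_nhds hx)).hasDerivAt
  rw [show (fun x => g x * exp x) = g * exp from rfl, (hgx.mul (hasDerivAt_exp x)).deriv]
  nlinarith [h x hx, exp_pos x]

theorem mul_abs_rpow_sub_two_mul {p : ℝ} (hp : p ≠ 0) (z : ℝ) :
    z * (|z| ^ (p - 2) * z) = |z| ^ p := by
  rcases eq_or_ne z 0 with rfl | hz
  · simp [zero_rpow hp]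
  · have : |z| ^ (p - 2) = |z| ^ p / |z| ^ 2 := by
      exact_mod_cast rpow_sub_natCast (abs_ne_zero.2 hz) p 2
    rw [this, sq_abs]
    field_simp

section Drift

noncomputable def drift (β z : ℝ) : ℝ := z / (1 + |z| ^ (1 + β))

noncomputable def driftDeriv (β z : ℝ) : ℝ :=
  (1 - β * |z| ^ (1 + β)) / (1 + |z| ^ (1 + β)) ^ 2

variable {β : ℝ}

theorem hasDerivAt_drift (hβ : 0 < β) (z : ℝ) : HasDerivAt (drift β) (driftDeriv β z) z := by
  have hden : 1 + |z| ^ (1 + β) ≠ 0 := by positivity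
  have h := (hasDerivAt_id' z).fun_div
    ((hasDerivAt_abs_rpow z (by linarith : 1 < 1 + β)).const_add 1) hden
  rw [mul_assoc, mul_left_comm z, mul_abs_rpow_sub_two_mul (by linarith)] at h
  refine h.congr_deriv ?_
  rw [driftDeriv]
  ring

theorem abs_drift_le_one (hβ : 0 ≤ β) (z : ℝ) : |drift β z| ≤ 1 := by
  rw [drift, abs_div, abs_of_pos (by positivity : 0 < 1 + |z| ^ (1 + β)),
    div_le_one (by positivity)]
  rcases le_total |z| 1 with hz | hz
  · linarith [rpow_nonneg (abs_nonneg z) (1 + β)]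
  · have := rpow_le_rpow_of_exponent_le hz (by linarith : (1 : ℝ) ≤ 1 + β)
    rw [rpow_one] at this
    linarith

theorem abs_driftDeriv_le_one (hβ0 : 0 ≤ β) (hβ2 : β ≤ 2) (z : ℝ) :
    |driftDeriv β z| ≤ 1 := by
  have ht : 0 ≤ |z| ^ (1 + β) := by positivity
  rw [driftDeriv, abs_div, abs_of_pos (by positivity : 0 < (1 + |z| ^ (1 + β)) ^ 2),
    div_le_one (by positivity), abs_le]
  constructor <;> nlinarith

theorem drift_add_driftDeriv (z : ℝ) :
    drift β z + driftDeriv β z =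
      (1 + z + |z| ^ (1 + β) * (z - β)) / (1 + |z| ^ (1 + β)) ^ 2 := by
  have hden : 1 + |z| ^ (1 + β) ≠ 0 := by positivity
  rw [drift, driftDeriv]
  field_simp
  ring

theorem one_add_add_abs_rpow_mul_sub_nonneg_of_nonneg (hβ0 : 0 ≤ β) (hβ1 : β ≤ 1) {z : ℝ}
    (hz : 0 ≤ z) :
    0 ≤ 1 + z + |z| ^ (1 + β) * (z - β) := by
  rw [abs_of_nonneg hz]
  have ht : 0 ≤ z ^ (1 + β) := by positivity
  rcases le_total β z with hβz | hzβ
  · nlinarith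
  · have : z ^ (1 + β) ≤ z := rpow_le_self_of_le_one hz (by linarith) (by linarith)
    nlinarith

theorem one_add_add_abs_rpow_mul_sub_nonneg_of_neg (hβ0 : 0 ≤ β) (hβ1 : β ≤ 1) {z : ℝ}
    (hz : -(1 / 2) ≤ z) (hz0 : z < 0) :
    0 ≤ 1 + z + |z| ^ (1 + β) * (z - β) := by
  set s := -z with hs
  have hs0 : 0 < s := by linarith
  rw [abs_of_neg hz0, ← hs, rpow_add hs0, rpow_one, show z = -s by rw [hs, neg_neg]]
  have hbern : s ^ β ≤ 1 + β * (s - 1) := by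
    simpa using rpow_one_add_le_one_add_mul_self (by linarith : -1 ≤ s - 1) hβ0 hβ1
  have hs : s ≤ 1 / 2 := by linarith
  have hpow : s ^ β * (s + β) ≤ 1 :=
    calc s ^ β * (s + β) ≤ (1 + β * (s - 1)) * (s + β) := by gcongr
      _ ≤ 1 := by
        nlinarith [mul_nonneg (sub_nonneg.2 hs) hs0.le, mul_nonneg (sub_nonneg.2 hs) hβ0,
          mul_nonneg (mul_nonneg (sub_nonneg.2 hs) hβ0) hs0.le, sq_nonneg (β - 3 / 4)]
  nlinarith

theorem drift_add_driftDeriv_nonneg (hβ0 : 0 ≤ β) (hβ1 : β ≤ 1) {z : ℝ}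
    (hz : -(1 / 2) ≤ z) :
    0 ≤ drift β z + driftDeriv β z := by
  rw [drift_add_driftDeriv]
  refine div_nonneg ?_ (sq_nonneg _)
  rcases le_or_gt 0 z with hz0 | hz0
  · exact one_add_add_abs_rpow_mul_sub_nonneg_of_nonneg hβ0 hβ1 hz0
  · exact one_add_add_abs_rpow_mul_sub_nonneg_of_neg hβ0 hβ1 hz hz0

end Drift

theorem drift_deriv_bound_general (β : ℝ) (hβ0 : 0 < β) (hβ1 : β < 1)
    (f : ℝ → ℝ) (hf : ∀ x, f x = x / (1 + |x| ^ (1 + β)))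
    (a b : ℝ)
    (μ : Measure ℝ) [IsFiniteMeasure μ] (hsupp : μ (Set.Icc a b)ᶜ = 0)
    (h : ℝ → ℝ) (hh : ∀ x, h x = ∫ y, f (x - y) ∂μ) :
    Differentiable ℝ h ∧
    (∀ x ∈ Set.Icc (b - 1/2) b, -h x ≤ deriv h x) ∧
    MonotoneOn (fun x => h x * Real.exp x) (Set.Icc (b - 1/2) b) := by
  obtain rfl : f = drift β := funext hf
  have hcont : Continuous (drift β) :=
    continuous_iff_continuousAt.2 fun z => (hasDerivAt_drift hβ0 z).continuousAt
  have hint (x : ℝ) : Integrable (fun y => drift β (x - y)) μ :=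
    .of_bound (hcont.comp (continuous_const.sub continuous_id)).aestronglyMeasurable 1
      (.of_forall fun y => abs_drift_le_one hβ0.le _)
  have hderiv (x : ℝ) := hasDerivAt_integral_comp_sub (C := 1) (hasDerivAt_drift hβ0)
    (fun z => by simpa using abs_driftDeriv_le_one hβ0.le (by linarith) z) (hint x)
  have hderiv_h (x : ℝ) : HasDerivAt h (∫ y, driftDeriv β (x - y) ∂μ) x :=
    funext hh ▸ (hderiv x).2
  have hdiff : Differentiable ℝ h := fun x => (hderiv_h x).differentiableAt
  have hbound : ∀ x ∈ Icc (b - 1/2) b, -h x ≤ deriv h x := by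
    intro x hx
    rw [(hderiv_h x).deriv, hh, ← integral_neg]
    refine integral_mono_ae (hint x).neg (hderiv x).1 ?_
    filter_upwards [ae_iff.2 hsupp] with y hy
    linarith [drift_add_driftDeriv_nonneg hβ0.le hβ1.le (z := x - y) (by linarith [hx.1, hy.2])]
  exact ⟨hdiff, hbound, monotoneOn_mul_exp_of_neg_le_deriv (convex_Icc _ _)
    hdiff.continuous.continuousOn hdiff.differentiableOn
    fun x hx => hbound x (interior_subset hx)⟩

theorem drift_deriv_bound (β : ℝ) (hβ0 : 0 < β) (hβ1 : β < 1)
    (f : ℝ → ℝ) (hf : ∀ x, f x = x / (1 + |x| ^ (1 + β)))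
    (a b : ℝ) (hab : a ≤ b)
    (μ : Measure ℝ) [IsFiniteMeasure μ] (hsupp : μ (Set.Icc a b)ᶜ = 0)
    (h : ℝ → ℝ) (hh : ∀ x, h x = ∫ y, f (x - y) ∂μ) :
    Differentiable ℝ h ∧
    (∀ x ∈ Set.Icc (b - 1/2) b, -h x ≤ deriv h x) ∧
    MonotoneOn (fun x => h x * Real.exp x) (Set.Icc (b - 1/2) b) :=
  drift_deriv_bound_general β hβ0 hβ1 f hf a b μ hsupp h hh
end
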